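/- For every positive integer k there exists a tree T with γ_g(T) = k and γ_g'(T) = k + 1. -/

import Mathlib

open Finset

namespace DomGame

variable {V : Type*} [Fintype V] [DecidableEq V]

/-- Closed neighborhood of `v` in `G`, as a `Finset`. -/
noncomputable def cn (G : SimpleGraph V) (v : V) : Finset V :=
  haveI : DecidablePred (fun u : V => u = v ∨ G.Adj v u) := fun _ => Classical.propDecidable _
  Finset.univ.filter (fun u : V => u = v ∨ G.Adj v u)

/-- Value (number of remaining moves, optimal play) of the domination game on `G`,
with fuel, where `D` is the set of already dominated vertices and `who = true`
means Dominator is to move (minimizing); `who = false` means Staller (maximizing). -/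
noncomputable def auxVal (G : SimpleGraph V) : ℕ → Bool → Finset V → ℕ
  | 0, _, _ => 0
  | n + 1, who, D =>
    if D = Finset.univ then 0
    else
      haveI : DecidablePred (fun v : V => ¬ cn G v ⊆ D) := fun _ => Classical.propDecidable _
      let moves : Finset V := Finset.univ.filter (fun v : V => ¬ cn G v ⊆ D)
      if who then
        WithTop.untopD 0 ((moves.image (fun v => 1 + auxVal G n false (D ∪ cn G v))).min)
      else
        moves.sup (fun v => 1 + auxVal G n true (D ∪ cn G v))

/-- Remaining moves of the domination game on the partially dominated graph `(G, D)`,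
Dominator to move, both players optimal. -/
noncomputable def gVal (G : SimpleGraph V) (D : Finset V) : ℕ :=
  auxVal G (Fintype.card V) true D

/-- Remaining moves, Staller to move. -/
noncomputable def gVal' (G : SimpleGraph V) (D : Finset V) : ℕ :=
  auxVal G (Fintype.card V) false D

/-- The game domination number (Dominator starts). -/
noncomputable def gammaG (G : SimpleGraph V) : ℕ := gVal G ∅

/-- The Staller-start game domination number. -/
noncomputable def gammaG' (G : SimpleGraph V) : ℕ := gVal' G ∅

/-- `S` is a dominating set of `G`. -/
def IsDomSet (G : SimpleGraph V) (S : Finset V) : Prop :=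
  ∀ v : V, ∃ u ∈ S, u = v ∨ G.Adj u v

/-- The domination number of `G`. -/
noncomputable def gamma (G : SimpleGraph V) : ℕ :=
  sInf {n | ∃ S : Finset V, IsDomSet G S ∧ S.card = n}

end DomGame

/-! Call `P` a packing if every closed neighbourhood meets it at most once. Every move dominates
at most one undominated vertex of a packing, so at least `|P ∖ D|` moves remain once `D` is
dominated; and every move dominates a new vertex, so once Dominator has played `c` at most
`|V ∖ N[c]|` further moves are made.

In the spider with centre `c`, two pendant leaves at `c`, one of them `x`, and `k - 1` legs of
length two, the leaves other than `x` form a packing of size `k`, and `|V ∖ N[c]| = k - 1`. So Dominator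
opening with `c` gives `γ_g = k`. In the Staller-start game Dominator can still answer with `c`,
while Staller opening with `x` dominates no vertex of the packing, so `γ_g' = k + 1`. -/

theorem Finset.untopD_min_image {α : Type*} {s : Finset α} {f : α → ℕ} (hs : s.Nonempty) :
    WithTop.untopD 0 (s.image f).min = s.inf' hs f := by
  rw [← coe_min' (hs.image f), WithTop.untopD_coe, min'_eq_inf', inf'_image]
  rfl

namespace SimpleGraph

theorem isTree_fromRel_parent {V : Type*} [Finite V] [LinearOrder V] (r : V) (p : V → V)
    (hp : ∀ v ≠ r, v < p v) : (fromRel fun u v => u ≠ r ∧ v = p u).IsTree := by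
  set G := fromRel fun u v : V => u ≠ r ∧ v = p u
  have hadj : ∀ v ≠ r, G.Adj v (p v) := fun v hv => by
    simp [G, (hp v hv).ne, hv]
  have hreach : ∀ v, G.Reachable v r := fun v => by
    induction v using WellFoundedGT.induction with
    | _ v ih =>
      by_cases hv : v = r
      · rw [hv]
      · exact (hadj v hv).reachable.trans (ih _ (hp v hv))
  have hedge : Function.Bijective
      fun v : {v // v ≠ r} => (⟨s(v, p v), hadj v v.2⟩ : G.edgeSet) := by
    refine ⟨fun v w hvw => ?_, ?_⟩
    · have h := congrArg Subtype.val hvw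
      simp only [Sym2.eq_iff] at h
      rcases h with ⟨h, -⟩ | ⟨h₁, h₂⟩
      · exact Subtype.ext h
      · have hvw : v.1 < w := h₂ ▸ hp v v.2
        have hwv : w.1 < v := h₁ ▸ hp w w.2
        exact absurd hvw hwv.asymm
    · rintro ⟨e, he⟩
      induction e using Sym2.ind with
      | _ a b =>
        simp only [G, mem_edgeSet, fromRel_adj] at he
        rcases he with ⟨-, ⟨ha, rfl⟩ | ⟨hb, rfl⟩⟩
        · exact ⟨⟨a, ha⟩, rfl⟩
        · exact ⟨⟨b, hb⟩, Subtype.ext Sym2.eq_swap⟩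
  rw [isTree_iff_connected_and_card, ← Nat.card_congr (Equiv.ofBijective _ hedge),
    ← Finite.card_option, Nat.card_congr (Equiv.optionSubtypeNe r)]
  exact ⟨(connected_iff_exists_forall_reachable G).2 ⟨r, fun v => (hreach v).symm⟩, rfl⟩

end SimpleGraph

namespace DomGame

section Game

variable {V : Type*} [Fintype V] {G : SimpleGraph V} {n m : ℕ} {D : Finset V}

theorem mem_cn {u v : V} : u ∈ cn G v ↔ u = v ∨ G.Adj v u := by
  simp [cn]

theorem self_mem_cn (v : V) : v ∈ cn G v := mem_cn.2 (.inl rfl)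

theorem exists_not_cn_subset (hD : D ≠ univ) : ∃ v, ¬ cn G v ⊆ D := by
  obtain ⟨v, hv⟩ : ∃ v, v ∉ D := by simpa [eq_univ_iff_forall] using hD
  exact ⟨v, fun h => hv (h (self_mem_cn v))⟩

theorem exists_card_eq_succ (c : V) : ∃ n, Fintype.card V = n + 1 :=
  ⟨_, (Nat.succ_pred_eq_of_pos (Fintype.card_pos_iff.2 ⟨c⟩)).symm⟩

/-- The legal moves at `D`, filtered with the decidability instance used in `auxVal`. -/
noncomputable def legalMoves (G : SimpleGraph V) (D : Finset V) : Finset V :=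
  @filter _ (fun v => ¬ cn G v ⊆ D) (fun _ => Classical.propDecidable _) univ

theorem mem_legalMoves {v : V} : v ∈ legalMoves G D ↔ ¬ cn G v ⊆ D := by
  simp [legalMoves]

theorem legalMoves_nonempty (hD : D ≠ univ) : (legalMoves G D).Nonempty :=
  let ⟨v, hv⟩ := exists_not_cn_subset (G := G) hD
  ⟨v, mem_legalMoves.2 hv⟩

variable [DecidableEq V]

theorem card_compl_union_cn_lt {v : V} (hv : ¬ cn G v ⊆ D) : #(D ∪ cn G v)ᶜ < #Dᶜ :=
  card_lt_card (compl_ssubset_compl.2 (left_lt_sup.2 hv))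

theorem auxVal_succ_true :
    auxVal G (n + 1) true D = WithTop.untopD 0
      ((legalMoves G D).image fun v => 1 + auxVal G n false (D ∪ cn G v)).min := by
  by_cases hD : D = univ
  · subst hD
    simp [auxVal, legalMoves]
  · rw [auxVal, if_neg hD]
    rfl

theorem auxVal_succ_false :
    auxVal G (n + 1) false D =
      (legalMoves G D).sup fun v => 1 + auxVal G n true (D ∪ cn G v) := by
  by_cases hD : D = univ
  · subst hD
    simp [auxVal, legalMoves]
  · rw [auxVal, if_neg hD]
    rfl

theorem le_auxVal_succ {who : Bool} (hD : D ≠ univ)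
    (h : ∀ v, ¬ cn G v ⊆ D → m ≤ 1 + auxVal G n (!who) (D ∪ cn G v)) :
    m ≤ auxVal G (n + 1) who D := by
  obtain ⟨u, hu⟩ := legalMoves_nonempty (G := G) hD
  cases who
  · rw [auxVal_succ_false]
    exact (h u (mem_legalMoves.1 hu)).trans
      (le_sup (f := fun v => 1 + auxVal G n true (D ∪ cn G v)) hu)
  · rw [auxVal_succ_true, untopD_min_image (legalMoves_nonempty hD), le_inf'_iff]
    exact fun v hv => h v (mem_legalMoves.1 hv)

theorem auxVal_succ_le {who : Bool}
    (h : ∀ v, ¬ cn G v ⊆ D → 1 + auxVal G n (!who) (D ∪ cn G v) ≤ m) :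
    auxVal G (n + 1) who D ≤ m := by
  cases who
  · rw [auxVal_succ_false]
    exact Finset.sup_le fun v hv => h v (mem_legalMoves.1 hv)
  · by_cases hD : D = univ
    · subst hD
      simp [auxVal]
    obtain ⟨u, hu⟩ := legalMoves_nonempty (G := G) hD
    rw [auxVal_succ_true, untopD_min_image ⟨u, hu⟩]
    exact (inf'_le _ hu).trans (h u (mem_legalMoves.1 hu))

theorem auxVal_succ_true_le {v : V} (hv : ¬ cn G v ⊆ D) :
    auxVal G (n + 1) true D ≤ 1 + auxVal G n false (D ∪ cn G v) := by
  have hmem := mem_legalMoves.2 hv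
  rw [auxVal_succ_true, untopD_min_image ⟨v, hmem⟩]
  exact inf'_le (fun v => 1 + auxVal G n false (D ∪ cn G v)) hmem

theorem le_auxVal_succ_false {v : V} (hv : ¬ cn G v ⊆ D) :
    1 + auxVal G n true (D ∪ cn G v) ≤ auxVal G (n + 1) false D := by
  rw [auxVal_succ_false]
  exact le_sup (f := fun v => 1 + auxVal G n true (D ∪ cn G v)) (mem_legalMoves.2 hv)

theorem auxVal_le_card_compl (n : ℕ) (who : Bool) (D : Finset V) : auxVal G n who D ≤ #Dᶜ := by
  induction n generalizing who D with
  | zero => exact Nat.zero_le _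
  | succ n ih =>
    refine auxVal_succ_le fun v hv => ?_
    have := card_compl_union_cn_lt hv
    have := ih (!who) (D ∪ cn G v)
    omega

theorem auxVal_true_le_one_add_card_compl_cn (n : ℕ) (D : Finset V) (c : V) :
    auxVal G n true D ≤ 1 + #(cn G c)ᶜ := by
  cases n with
  | zero => exact Nat.zero_le _
  | succ n =>
    by_cases hc : cn G c ⊆ D
    · calc auxVal G (n + 1) true D ≤ #Dᶜ := auxVal_le_card_compl _ _ _
        _ ≤ 1 + #(cn G c)ᶜ := le_add_left (card_le_card (compl_subset_compl.2 hc))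
    · calc auxVal G (n + 1) true D ≤ 1 + auxVal G n false (D ∪ cn G c) := auxVal_succ_true_le hc
        _ ≤ 1 + #(D ∪ cn G c)ᶜ := by grw [auxVal_le_card_compl]
        _ ≤ 1 + #(cn G c)ᶜ := by gcongr; exact subset_union_right

def IsPacking (G : SimpleGraph V) (P : Finset V) : Prop :=
  ∀ v, #(cn G v ∩ P) ≤ 1

theorem IsPacking.card_compl_inter_le {P : Finset V} (hP : IsPacking G P) (D : Finset V) (v : V) :
    #(Dᶜ ∩ P) ≤ #((D ∪ cn G v)ᶜ ∩ P) + 1 :=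
  calc #(Dᶜ ∩ P) ≤ #((D ∪ cn G v)ᶜ ∩ P ∪ cn G v ∩ P) :=
        card_le_card fun x => by simp only [mem_inter, mem_union, mem_compl]; tauto
    _ ≤ #((D ∪ cn G v)ᶜ ∩ P) + 1 := (card_union_le _ _).trans (by grw [hP v])

theorem IsPacking.card_compl_inter_le_auxVal {P : Finset V} (hP : IsPacking G P) {who : Bool}
    (hn : #Dᶜ ≤ n) : #(Dᶜ ∩ P) ≤ auxVal G n who D := by
  induction n generalizing who D with
  | zero => simp [card_eq_zero.1 (Nat.le_zero.1 hn)]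
  | succ n ih =>
    by_cases hD : D = univ
    · simp [hD]
    refine le_auxVal_succ hD fun v hv => ?_
    have := card_compl_union_cn_lt hv
    have := ih (who := !who) (D := D ∪ cn G v) (by omega)
    have := hP.card_compl_inter_le D v
    omega

theorem gammaG_le (c : V) : gammaG G ≤ 1 + #(cn G c)ᶜ :=
  auxVal_true_le_one_add_card_compl_cn _ _ c

theorem gammaG'_le (c : V) : gammaG' G ≤ 2 + #(cn G c)ᶜ := by
  obtain ⟨n, hn⟩ := exists_card_eq_succ c
  rw [gammaG', gVal', hn]
  refine auxVal_succ_le fun v _ => ?_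
  rw [Bool.not_false]
  have := auxVal_true_le_one_add_card_compl_cn (G := G) n (∅ ∪ cn G v) c
  omega

theorem IsPacking.card_le_gammaG {P : Finset V} (hP : IsPacking G P) : #P ≤ gammaG G := by
  simpa [gammaG, gVal] using hP.card_compl_inter_le_auxVal (who := true) (D := ∅) (by simp)

theorem IsPacking.card_lt_gammaG' {P : Finset V} (hP : IsPacking G P) {v : V}
    (hv : Disjoint (cn G v) P) : #P < gammaG' G := by
  obtain ⟨n, hn⟩ := exists_card_eq_succ v
  have hfuel : #(∅ ∪ cn G v)ᶜ ≤ n := by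
    have := card_pos.2 ⟨v, self_mem_cn (G := G) v⟩
    rw [empty_union, card_compl]
    omega
  have hstaller := le_auxVal_succ_false (n := n) (D := ∅) (G := G) (v := v)
    fun h => notMem_empty v (h (self_mem_cn v))
  have hrest := hP.card_compl_inter_le_auxVal (who := true) hfuel
  rw [empty_union] at hstaller hrest
  rw [inter_eq_right.2 (subset_compl_iff_disjoint_left.2 hv)] at hrest
  rw [gammaG', gVal', hn]
  omega

end Game

/-- The spider on `Fin (2k+1)`: the centre is `2k`, the vertices `0` and `k` are leaves at the
centre, and for `1 ≤ i < k` the path `2k – (k+i) – i` is a leg. -/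
def spiderParent (k : ℕ) (u : Fin (2 * k + 1)) : Fin (2 * k + 1) :=
  if h : 1 ≤ u.val ∧ u.val < k then ⟨u + k, by omega⟩ else Fin.last (2 * k)

def spider (k : ℕ) : SimpleGraph (Fin (2 * k + 1)) :=
  SimpleGraph.fromRel fun u v => u ≠ Fin.last (2 * k) ∧ v = spiderParent k u

def spiderPacking (k : ℕ) : Finset (Fin (2 * k + 1)) := {u | u.val < k}

variable {k : ℕ}

theorem val_spiderParent (u : Fin (2 * k + 1)) :
    (spiderParent k u).val = if 1 ≤ u.val ∧ u.val < k then u.val + k else 2 * k := by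
  unfold spiderParent
  split_ifs <;> rfl

theorem lt_spiderParent {u : Fin (2 * k + 1)} (hu : u ≠ Fin.last (2 * k)) :
    u < spiderParent k u := by
  have := Fin.val_lt_last hu
  rw [Fin.lt_def, val_spiderParent]
  split_ifs <;> omega

theorem spider_isTree (k : ℕ) : (spider k).IsTree :=
  SimpleGraph.isTree_fromRel_parent _ _ fun _ => lt_spiderParent

theorem mem_cn_spider {u v : Fin (2 * k + 1)} :
    u ∈ cn (spider k) v ↔ u = v ∨ (v ≠ Fin.last (2 * k) ∧ u = spiderParent k v) ∨
      (u ≠ Fin.last (2 * k) ∧ v = spiderParent k u) := by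
  rw [mem_cn, spider, SimpleGraph.fromRel_adj]
  constructor
  · rintro (h | ⟨-, h⟩) <;> tauto
  · rintro (h | ⟨hv, rfl⟩ | ⟨hu, rfl⟩)
    · exact .inl h
    · exact .inr ⟨(lt_spiderParent hv).ne, .inl ⟨hv, rfl⟩⟩
    · exact .inr ⟨(lt_spiderParent hu).ne', .inr ⟨hu, rfl⟩⟩

theorem mem_spiderPacking {u : Fin (2 * k + 1)} : u ∈ spiderPacking k ↔ u.val < k := by
  simp [spiderPacking]

theorem card_spiderPacking (k : ℕ) : #(spiderPacking k) = k := by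
  rw [spiderPacking, Fin.card_filter_val_lt]
  omega

theorem spider_isPacking (k : ℕ) : IsPacking (spider k) (spiderPacking k) := by
  refine fun v => card_le_one.2 fun a ha b hb => ?_
  simp only [mem_inter, mem_spiderPacking, mem_cn_spider, ne_eq, Fin.ext_iff, Fin.val_last,
    val_spiderParent] at ha hb
  ext
  split_ifs at ha hb <;> omega

theorem card_compl_cn_last_spider_le (hk : 1 ≤ k) :
    #(cn (spider k) (Fin.last (2 * k)))ᶜ ≤ k - 1 := by
  have h0 : (0 : Fin (2 * k + 1)) ∈ spiderPacking k := mem_spiderPacking.2 hk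
  calc #(cn (spider k) (Fin.last (2 * k)))ᶜ ≤ #((spiderPacking k).erase 0) := by
        refine card_le_card fun u hu => ?_
        simp only [mem_compl, mem_cn_spider, mem_erase, mem_spiderPacking, ne_eq, Fin.ext_iff,
          Fin.val_last, val_spiderParent, Fin.val_zero] at hu ⊢
        split_ifs at hu <;> omega
    _ = k - 1 := by rw [card_erase_of_mem h0, card_spiderPacking]

theorem disjoint_cn_spiderPacking (hk : 1 ≤ k) :
    Disjoint (cn (spider k) ⟨k, by omega⟩) (spiderPacking k) := by
  refine disjoint_left.2 fun u hu hP => ?_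
  simp only [mem_cn_spider, mem_spiderPacking, ne_eq, Fin.ext_iff, Fin.val_last,
    val_spiderParent] at hu hP
  split_ifs at hu <;> omega

end DomGame

/-- for every k ≥ 1 there is a tree T with γ_g(T) = k and γ_g'(T) = k + 1. -/
theorem stmt6 (k : ℕ) (hk : 1 ≤ k) :
    ∃ (n : ℕ) (T : SimpleGraph (Fin n)), T.IsTree ∧
      DomGame.gammaG T = k ∧ DomGame.gammaG' T = k + 1 := by
  open DomGame in
  have hP := spider_isPacking k
  have hcard := card_spiderPacking k
  have hcentre := card_compl_cn_last_spider_le hk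
  refine ⟨2 * k + 1, spider k, spider_isTree k, ?_, ?_⟩
  · have := hP.card_le_gammaG
    have := gammaG_le (G := spider k) (Fin.last (2 * k))
    omega
  · have := hP.card_lt_gammaG' (disjoint_cn_spiderPacking hk)
    have := gammaG'_le (G := spider k) (Fin.last (2 * k))
    omega
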